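/- Fix q ∈ (0,1). Let F be the CDF of any probability distribution on [0,∞) with mean at most 1, and let â be the SAA decision based on n IID samples from F. For any δ ∈ (0,1), if n ≥ 2·log(2/δ)/(1−q)², then with probability at least 1−δ, the additive regret satisfies L(â) − L(a*) ≤ (2/(1−q))·√(log(2/δ)/(2n)). -/

import Mathlib

/-!
Let `b` and `c` be the `(q + ε)`- and `(q - ε)`-quantiles of `F`, where
`ε = √(log (2/δ) / (2n))`. Hoeffding's inequality for the empirical CDF at the two points `b`
and `c - ε` shows that, with probability at least `1 - 2 exp (-2nε²) = 1 - δ`, the SAA decision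
lies in `[c - ε, b]`. On that event the regret is bounded deterministically: `L` is convex with
one-sided slopes `F(a) - q` and `P(Z < a) - q`, so for `â ≥ a*` the regret is at most
`(â - a*) ε ≤ b ε`, while for `â < a*` comparing through `d = max â c` bounds it by
`(d - â) q + (a* - d) ε`. Markov's inequality (mean at most `1`) gives `a* ≤ 1/(1-q)` and,
since `ε ≤ (1-q)/2`, `b ≤ 2/(1-q)`.
-/

open MeasureTheory Set

noncomputable section

/-- The Newsvendor loss `ℓ(a,Z) = q·max{Z−a,0} + (1−q)·max{a−Z,0}` with critical quantile `q`. -/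
def nvLoss (q a z : ℝ) : ℝ := q * max (z - a) 0 + (1 - q) * max (a - z) 0

/-- The expected Newsvendor loss `L(a)` under the demand distribution `μ`. -/
def expLoss (q : ℝ) (μ : Measure ℝ) (a : ℝ) : ℝ := ∫ z, nvLoss q a z ∂μ

/-- The CDF of the demand distribution `μ`. -/
def cdf' (μ : Measure ℝ) (z : ℝ) : ℝ := (μ (Iic z)).toReal

/-- The optimal decision `a* = inf {a ≥ 0 : F(a) ≥ q}`. -/
def optDec (q : ℝ) (μ : Measure ℝ) : ℝ := sInf {a : ℝ | 0 ≤ a ∧ q ≤ cdf' μ a}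

/-- The empirical CDF of the samples `ω : Fin n → ℝ`. -/
def empCdf (n : ℕ) (ω : Fin n → ℝ) (z : ℝ) : ℝ :=
  (∑ i : Fin n, if ω i ≤ z then (1 : ℝ) else 0) / n

/-- The SAA (sample average approximation) decision `â = inf {a ≥ 0 : F̂(a) ≥ q}`. -/
def saa (q : ℝ) (n : ℕ) (ω : Fin n → ℝ) : ℝ := sInf {a : ℝ | 0 ≤ a ∧ q ≤ empCdf n ω a}

/-- The joint law of `n` iid samples from `μ`. -/
def iid (μ : Measure ℝ) (n : ℕ) : Measure (Fin n → ℝ) := Measure.pi fun _ => μ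

/-- A distribution `μ` is `(β,γ,ζ)`-clustered if
`|a − a*| ≤ (1/γ)·|F(a) − q|^{1/(β+1)}` for all `a ∈ [a*−ζ, a*+ζ]`. -/
def Clustered (q β γ ζ : ℝ) (μ : Measure ℝ) : Prop :=
  ∀ a ∈ Icc (optDec q μ - ζ) (optDec q μ + ζ),
    |a - optDec q μ| ≤ (1 / γ) * |cdf' μ a - q| ^ ((1 : ℝ) / (β + 1))

lemma ofReal_one_sub_le_of_measureReal_compl_le {α : Type*} [MeasurableSpace α] {P : Measure α}
    [IsProbabilityMeasure P] {s : Set α} {δ : ℝ} (h : P.real sᶜ ≤ δ) :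
    ENNReal.ofReal (1 - δ) ≤ P s := by
  have hunion := measureReal_union_le (μ := P) s sᶜ
  rw [union_compl_self, probReal_univ] at hunion
  rw [ENNReal.ofReal_le_iff_le_toReal (measure_ne_top P s), ← measureReal_def]
  linarith

lemma sqrt_div_two_mul_le {L m s : ℝ} (hs : 0 < s) (hm : 0 < m) (h : 2 * L / s ^ 2 ≤ m) :
    √(L / (2 * m)) ≤ s / 2 := by
  rw [Real.sqrt_le_left (by positivity), div_le_iff₀ (by positivity)]
  rw [div_le_iff₀ (by positivity)] at h
  nlinarith

section Hoeffding

open Real ProbabilityTheory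

lemma measureReal_card_mul_le_sum_sub_integral_le {ι E : Type*} [Fintype ι] [MeasurableSpace E]
    (μ : Measure E) [IsProbabilityMeasure μ] {g : E → ℝ} (hg : Measurable g) {a : ℝ}
    (hga : ∀ x, g x ∈ Icc a (a + 1)) {ε : ℝ} (hε : 0 ≤ ε) :
    (Measure.pi fun _ : ι => μ).real
        {ω | Fintype.card ι * ε ≤ ∑ i, (g (ω i) - ∫ x, g x ∂μ)}
      ≤ exp (-(2 * Fintype.card ι * ε ^ 2)) := by
  rcases isEmpty_or_nonempty ι with hι | hι
  · simp
  have h_indep : iIndepFun (fun i (ω : ι → E) => g (ω i) - ∫ x, g x ∂μ)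
      (Measure.pi fun _ => μ) :=
    iIndepFun_pi (X := fun _ z => g z - ∫ x, g x ∂μ) fun _ => (hg.sub_const _).aemeasurable
  have h_subG (i : ι) (_ : i ∈ Finset.univ) :
      HasSubgaussianMGF (fun ω : ι → E => g (ω i) - ∫ x, g x ∂μ)
        ((‖(a + 1) - a‖₊ / 2) ^ 2) (Measure.pi fun _ => μ) := by
    have h := hasSubgaussianMGF_of_mem_Icc (μ := Measure.pi fun _ => μ)
      (X := fun ω => g (ω i)) (hg.comp (measurable_pi_apply i)).aemeasurable
      (ae_of_all _ fun ω => hga (ω i))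
    rwa [integral_comp_eval hg.aestronglyMeasurable] at h
  refine (HasSubgaussianMGF.measure_sum_ge_le_of_iIndepFun h_indep h_subG
    (by positivity)).trans_eq ?_
  congr 1
  simp only [add_sub_cancel_left, nnnorm_one, Finset.sum_const, Finset.card_univ, nsmul_eq_mul]
  push_cast
  field_simp

variable {μ : Measure ℝ} [IsProbabilityMeasure μ] {n : ℕ}

lemma sum_indicator_Iic_eq_mul_empCdf (hn : 0 < n) (ω : Fin n → ℝ) (t : ℝ) :
    ∑ i, (Iic t).indicator 1 (ω i) = n * empCdf n ω t := by
  rw [empCdf, mul_div_cancel₀ _ (by exact_mod_cast hn.ne')]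
  simp only [indicator_apply, mem_Iic, Pi.one_apply]

lemma measureReal_cdf'_add_le_empCdf_le (hn : 0 < n) (t : ℝ) {ε : ℝ} (hε : 0 ≤ ε) :
    (iid μ n).real {ω | cdf' μ t + ε ≤ empCdf n ω t} ≤ exp (-(2 * n * ε ^ 2)) := by
  have h := measureReal_card_mul_le_sum_sub_integral_le (ι := Fin n) μ
    (measurable_one.indicator (measurableSet_Iic (a := t))) (a := 0)
    (fun z => by by_cases h : z ≤ t <;> simp [h]) hε
  rw [Fintype.card_fin, integral_indicator_one measurableSet_Iic] at h
  refine le_of_eq_of_le ?_ h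
  congr 1
  ext ω
  rw [mem_ofPred_eq, mem_ofPred_eq, Finset.sum_sub_distrib, sum_indicator_Iic_eq_mul_empCdf hn,
    Finset.sum_const, Finset.card_univ, Fintype.card_fin, nsmul_eq_mul, ← mul_sub,
    mul_le_mul_iff_right₀ (by exact_mod_cast hn), cdf', measureReal_def]
  constructor <;> intro h <;> linarith

lemma measureReal_empCdf_le_cdf'_sub_le (hn : 0 < n) (t : ℝ) {ε : ℝ} (hε : 0 ≤ ε) :
    (iid μ n).real {ω | empCdf n ω t ≤ cdf' μ t - ε} ≤ exp (-(2 * n * ε ^ 2)) := by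
  have h := measureReal_card_mul_le_sum_sub_integral_le (ι := Fin n) μ
    (g := fun z => -(Iic t).indicator 1 z) (measurable_one.indicator measurableSet_Iic).neg
    (a := -1)
    (fun z => by by_cases h : z ≤ t <;> simp [h]) hε
  rw [Fintype.card_fin, integral_neg, integral_indicator_one measurableSet_Iic] at h
  refine le_of_eq_of_le ?_ h
  congr 1
  ext ω
  simp only [sub_neg_eq_add, neg_add_eq_sub]
  rw [mem_ofPred_eq, mem_ofPred_eq, Finset.sum_sub_distrib, sum_indicator_Iic_eq_mul_empCdf hn,
    Finset.sum_const, Finset.card_univ, Fintype.card_fin, nsmul_eq_mul, ← mul_sub,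
    mul_le_mul_iff_right₀ (by exact_mod_cast hn), cdf', measureReal_def]
  constructor <;> intro h <;> linarith

end Hoeffding

section Quantile

-- `optDec q μ` and `saa q n ω` are definitionally `nonnegQuantile (cdf' μ) q` and
-- `nonnegQuantile (empCdf n ω) q`.
def nonnegQuantile (F : ℝ → ℝ) (r : ℝ) : ℝ := sInf {a : ℝ | 0 ≤ a ∧ r ≤ F a}

variable {F : ℝ → ℝ} {r a : ℝ}

lemma nonnegQuantile_nonneg : 0 ≤ nonnegQuantile F r := Real.sInf_nonneg fun _ h => h.1

lemma nonnegQuantile_le (ha : 0 ≤ a) (h : r ≤ F a) : nonnegQuantile F r ≤ a :=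
  csInf_le ⟨0, fun _ h => h.1⟩ ⟨ha, h⟩

lemma lt_of_lt_nonnegQuantile (ha : 0 ≤ a) (h : a < nonnegQuantile F r) : F a < r :=
  lt_of_not_ge fun hr => (nonnegQuantile_le ha hr).not_gt h

lemma le_of_nonnegQuantile_lt (hF : Monotone F) (hne : ∃ a, 0 ≤ a ∧ r ≤ F a)
    (h : nonnegQuantile F r < a) : r ≤ F a := by
  obtain ⟨b, hb, hba⟩ := exists_lt_of_csInf_lt hne h
  exact hb.2.trans (hF hba.le)

lemma le_apply_nonnegQuantile (hF : Monotone F)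
    (hcont : ContinuousWithinAt F (Ici (nonnegQuantile F r)) (nonnegQuantile F r))
    (hne : ∃ a, 0 ≤ a ∧ r ≤ F a) : r ≤ F (nonnegQuantile F r) :=
  ge_of_tendsto (hcont.mono Ioi_subset_Ici_self)
    (eventually_nhdsWithin_of_forall fun _ h => le_of_nonnegQuantile_lt hF hne h)

lemma nonnegQuantile_mono {r' : ℝ} (hne : ∃ a, 0 ≤ a ∧ r' ≤ F a) (h : r ≤ r') :
    nonnegQuantile F r ≤ nonnegQuantile F r' :=
  csInf_le_csInf ⟨0, fun _ h => h.1⟩ hne fun _ ha => ⟨ha.1, h.trans ha.2⟩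

end Quantile

section Cdf

open ProbabilityTheory

variable {μ : Measure ℝ}

lemma cdf'_nonneg (t : ℝ) : 0 ≤ cdf' μ t := ENNReal.toReal_nonneg

lemma cdf'_eq_zero_of_neg (hsupp : μ (Iio 0) = 0) {t : ℝ} (ht : t < 0) : cdf' μ t = 0 := by
  rw [cdf', measure_mono_null (Iic_subset_Iio.2 ht) hsupp, ENNReal.toReal_zero]

variable [IsProbabilityMeasure μ]

lemma cdf'_eq_cdf : cdf' μ = cdf μ := funext fun t => (cdf_eq_real μ t).symm

lemma monotone_cdf' : Monotone (cdf' μ) := by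
  rw [cdf'_eq_cdf]
  exact monotone_cdf μ

lemma continuousWithinAt_cdf'_Ici (t : ℝ) : ContinuousWithinAt (cdf' μ) (Ici t) t := by
  rw [cdf'_eq_cdf]
  exact (cdf μ).right_continuous t

lemma measureReal_Iio_le_of_forall_lt {a r : ℝ} (h : ∀ t < a, cdf' μ t ≤ r) :
    μ.real (Iio a) ≤ r := by
  have hIio : μ.real (Iio a) = Function.leftLim (cdf' μ) a := by
    have hleft := (cdf μ).measure_Iio (tendsto_cdf_atBot μ) a
    rw [measure_cdf, sub_zero, ← cdf'_eq_cdf] at hleft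
    rw [measureReal_def, hleft, ENNReal.toReal_ofReal
      ((cdf'_nonneg _).trans (monotone_cdf'.le_leftLim (sub_one_lt a)))]
  rw [hIio]
  exact le_of_tendsto (monotone_cdf'.tendsto_leftLim a) (eventually_nhdsWithin_of_forall h)

lemma one_sub_integral_div_le_cdf' (hsupp : μ (Iio 0) = 0) (hmean : Integrable (fun z => z) μ)
    {a : ℝ} (ha : 0 < a) : 1 - (∫ z, z ∂μ) / a ≤ cdf' μ a := by
  have hnonneg : 0 ≤ᵐ[μ] fun z => z := by
    rw [Filter.EventuallyLE, ae_iff]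
    simp only [Pi.zero_apply, not_le]
    exact hsupp
  have hmarkov := mul_meas_ge_le_integral_of_nonneg hnonneg hmean a
  have htail : μ.real (Ioi a) ≤ μ.real {z | a ≤ z} :=
    measureReal_mono fun _ hz => (mem_Ioi.1 hz).le
  rw [cdf', ← measureReal_def, ← compl_Ioi, probReal_compl_eq_one_sub measurableSet_Ioi,
    sub_le_sub_iff_left, le_div_iff₀ ha]
  nlinarith

end Cdf

section Loss

variable {q a a' : ℝ}

lemma nvLoss_eq (q a z : ℝ) : nvLoss q a z = q * (z - a) + max (a - z) 0 := by
  rcases le_total z a with h | h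
  · rw [nvLoss, max_eq_right (by linarith), max_eq_left (by linarith)]; ring
  · rw [nvLoss, max_eq_left (by linarith), max_eq_right (by linarith)]; ring

lemma nvLoss_sub_nvLoss_le (h : a ≤ a') (z : ℝ) :
    nvLoss q a' z - nvLoss q a z ≤ (a' - a) * ((Iio a').indicator 1 z - q) := by
  by_cases hz : z < a' <;>
  simp only [nvLoss_eq, max_def, indicator, mem_Iio, hz, Pi.one_apply, if_true, if_false] <;>
  split_ifs <;> linarith

lemma le_nvLoss_sub_nvLoss (h : a ≤ a') (z : ℝ) :
    (a' - a) * ((Iic a).indicator 1 z - q) ≤ nvLoss q a' z - nvLoss q a z := by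
  by_cases hz : z ≤ a <;>
  simp only [nvLoss_eq, max_def, indicator, mem_Iic, hz, Pi.one_apply, if_true, if_false] <;>
  split_ifs <;> linarith

variable {μ : Measure ℝ} [IsProbabilityMeasure μ]

lemma integrable_nvLoss (hmean : Integrable (fun z => z) μ) (q a : ℝ) :
    Integrable (nvLoss q a) μ := by
  rw [show nvLoss q a = fun z => q * (z - a) + max (a - z) 0 from funext (nvLoss_eq q a)]
  exact ((hmean.sub (integrable_const a)).const_mul q).add ((integrable_const a).sub hmean).pos_part

lemma integrable_indicator_one {s : Set ℝ} (hs : MeasurableSet s) :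
    Integrable (s.indicator (1 : ℝ → ℝ)) μ :=
  (integrable_const 1).indicator hs

lemma integral_mul_indicator_one_sub {s : Set ℝ} (hs : MeasurableSet s) (c q : ℝ) :
    ∫ z, c * (s.indicator 1 z - q) ∂μ = c * (μ.real s - q) := by
  rw [integral_const_mul, integral_sub (integrable_indicator_one hs) (integrable_const q),
    integral_indicator_one hs, integral_const, probReal_univ, one_smul]

lemma expLoss_sub_expLoss_le (hmean : Integrable (fun z => z) μ) (h : a ≤ a') :
    expLoss q μ a' - expLoss q μ a ≤ (a' - a) * (μ.real (Iio a') - q) := by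
  rw [expLoss, expLoss,
    ← integral_sub (integrable_nvLoss hmean q a') (integrable_nvLoss hmean q a),
    ← integral_mul_indicator_one_sub measurableSet_Iio]
  exact integral_mono ((integrable_nvLoss hmean q a').sub (integrable_nvLoss hmean q a))
    (((integrable_indicator_one measurableSet_Iio).sub (integrable_const q)).const_mul _)
    (nvLoss_sub_nvLoss_le h)

lemma le_expLoss_sub_expLoss (hmean : Integrable (fun z => z) μ) (h : a ≤ a') :
    (a' - a) * (cdf' μ a - q) ≤ expLoss q μ a' - expLoss q μ a := by
  rw [expLoss, expLoss,
    ← integral_sub (integrable_nvLoss hmean q a') (integrable_nvLoss hmean q a), cdf',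
    ← measureReal_def, ← integral_mul_indicator_one_sub measurableSet_Iic]
  exact integral_mono
    (((integrable_indicator_one measurableSet_Iic).sub (integrable_const q)).const_mul _)
    ((integrable_nvLoss hmean q a').sub (integrable_nvLoss hmean q a))
    (le_nvLoss_sub_nvLoss h)

end Loss

section Regret

variable {μ : Measure ℝ} [IsProbabilityMeasure μ] {q : ℝ}

lemma le_cdf'_one_div_one_sub (hsupp : μ (Iio 0) = 0) (hmean : Integrable (fun z => z) μ)
    (hmean1 : ∫ z, z ∂μ ≤ 1) {r : ℝ} (hr : r < 1) : r ≤ cdf' μ (1 / (1 - r)) := by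
  have h := one_sub_integral_div_le_cdf' hsupp hmean (one_div_pos.2 (sub_pos.2 hr))
  rw [div_div_eq_mul_div, div_one] at h
  nlinarith

lemma exists_nonneg_le_cdf' (hsupp : μ (Iio 0) = 0) (hmean : Integrable (fun z => z) μ)
    (hmean1 : ∫ z, z ∂μ ≤ 1) {r : ℝ} (hr : r < 1) : ∃ a, 0 ≤ a ∧ r ≤ cdf' μ a :=
  ⟨_, (one_div_pos.2 (sub_pos.2 hr)).le, le_cdf'_one_div_one_sub hsupp hmean hmean1 hr⟩

lemma nonnegQuantile_cdf'_le (hsupp : μ (Iio 0) = 0) (hmean : Integrable (fun z => z) μ)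
    (hmean1 : ∫ z, z ∂μ ≤ 1) {r : ℝ} (hr : r < 1) :
    nonnegQuantile (cdf' μ) r ≤ 1 / (1 - r) :=
  nonnegQuantile_le (one_div_pos.2 (sub_pos.2 hr)).le
    (le_cdf'_one_div_one_sub hsupp hmean hmean1 hr)

lemma expLoss_sub_expLoss_optDec_le (hq : q ∈ Ioo (0 : ℝ) 1) (hsupp : μ (Iio 0) = 0)
    (hmean : Integrable (fun z => z) μ) (hmean1 : ∫ z, z ∂μ ≤ 1) {ε a : ℝ}
    (hε : 0 ≤ ε) (hεq : ε ≤ (1 - q) / 2)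
    (hlo : nonnegQuantile (cdf' μ) (q - ε) - ε ≤ a)
    (hhi : a ≤ nonnegQuantile (cdf' μ) (q + ε)) :
    expLoss q μ a - expLoss q μ (optDec q μ) ≤ 2 / (1 - q) * ε := by
  obtain ⟨hq0, hq1⟩ := hq
  set A := optDec q μ
  set b := nonnegQuantile (cdf' μ) (q + ε)
  set c := nonnegQuantile (cdf' μ) (q - ε)
  have h1q : 0 < 1 - q := sub_pos.2 hq1
  have hA : A ≤ 1 / (1 - q) := nonnegQuantile_cdf'_le hsupp hmean hmean1 hq1
  rcases le_total A a with hAa | haA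
  · have hb : b ≤ 2 / (1 - q) := by
      refine (nonnegQuantile_cdf'_le hsupp hmean hmean1 (by linarith)).trans ?_
      rw [div_le_div_iff₀ (by linarith) h1q]
      linarith
    have hIio : μ.real (Iio a) ≤ q + ε := by
      refine measureReal_Iio_le_of_forall_lt fun t ht => ?_
      rcases lt_or_ge t 0 with ht0 | ht0
      · rw [cdf'_eq_zero_of_neg hsupp ht0]
        linarith
      · exact (lt_of_lt_nonnegQuantile ht0 (ht.trans_le hhi)).le
    have hA0 : 0 ≤ A := nonnegQuantile_nonneg
    calc expLoss q μ a - expLoss q μ A ≤ (a - A) * (μ.real (Iio a) - q) :=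
          expLoss_sub_expLoss_le hmean hAa
      _ ≤ (a - A) * ε := mul_le_mul_of_nonneg_left (by linarith) (sub_nonneg.2 hAa)
      _ ≤ 2 / (1 - q) * ε := mul_le_mul_of_nonneg_right (by linarith) hε
  · have hne := exists_nonneg_le_cdf' hsupp hmean hmean1 (r := q - ε) (by linarith)
    have hcA : c ≤ A := nonnegQuantile_mono (exists_nonneg_le_cdf' hsupp hmean hmean1 hq1)
      (by linarith)
    set d := max a c
    have hFd : q - ε ≤ cdf' μ d :=
      (le_apply_nonnegQuantile monotone_cdf' (continuousWithinAt_cdf'_Ici _) hne).trans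
        (monotone_cdf' (le_max_right a c))
    have had : a ≤ d := le_max_left a c
    have hdA : d ≤ A := max_le haA hcA
    have hda : d ≤ a + ε := max_le (by linarith) (by linarith)
    have hd0 : 0 ≤ d := (nonnegQuantile_nonneg).trans (le_max_right a c)
    have hq : q ≤ 1 / (1 - q) := by
      rw [le_div_iff₀ h1q]
      nlinarith
    calc expLoss q μ a - expLoss q μ A ≤ (d - a) * q + (A - d) * ε := by
          linarith [le_expLoss_sub_expLoss (q := q) hmean had,
            le_expLoss_sub_expLoss (q := q) hmean hdA,
            mul_nonneg (sub_nonneg.2 had) (cdf'_nonneg (μ := μ) a),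
            mul_nonneg (sub_nonneg.2 hdA) (by linarith : 0 ≤ cdf' μ d - q + ε)]
      _ ≤ ε * q + 1 / (1 - q) * ε :=
          add_le_add (mul_le_mul_of_nonneg_right (by linarith) hq0.le)
            (mul_le_mul_of_nonneg_right (by linarith) hε)
      _ ≤ 1 / (1 - q) * ε + 1 / (1 - q) * ε := by
          rw [mul_comm ε q]
          gcongr
      _ = 2 / (1 - q) * ε := by ring

end Regret

section SAA

open Real

instance {μ : Measure ℝ} [IsProbabilityMeasure μ] {n : ℕ} : IsProbabilityMeasure (iid μ n) :=
  inferInstanceAs (IsProbabilityMeasure (Measure.pi _))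

variable {μ : Measure ℝ} [IsProbabilityMeasure μ] {q : ℝ} {n : ℕ}

lemma monotone_empCdf (ω : Fin n → ℝ) : Monotone (empCdf n ω) := by
  intro s t hst
  unfold empCdf
  gcongr with i
  by_cases hs : ω i ≤ s
  · simp [hs, hs.trans hst]
  · simp only [hs, if_false]
    split_ifs <;> norm_num

lemma exists_nonneg_le_empCdf (hn : 0 < n) (hq : q ≤ 1) (ω : Fin n → ℝ) :
    ∃ a, 0 ≤ a ∧ q ≤ empCdf n ω a := by
  obtain ⟨M, hM⟩ := (Set.finite_range ω).bddAbove
  refine ⟨max M 0, le_max_right M 0, ?_⟩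
  have hω : ∀ i, ω i ≤ max M 0 := fun i => (hM ⟨i, rfl⟩).trans (le_max_left M 0)
  simpa [empCdf, hω, hn.ne'] using hq

lemma measureReal_lt_saa_le (hn : 0 < n) {ε b : ℝ} (hε : 0 ≤ ε) (hb0 : 0 ≤ b)
    (hb : q + ε ≤ cdf' μ b) :
    (iid μ n).real {ω | b < saa q n ω} ≤ exp (-(2 * n * ε ^ 2)) := by
  refine (measureReal_mono fun ω hω => ?_).trans (measureReal_empCdf_le_cdf'_sub_le hn b hε)
  show empCdf n ω b ≤ cdf' μ b - ε
  linarith [lt_of_lt_nonnegQuantile hb0 hω]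

lemma measureReal_saa_lt_le (hn : 0 < n) (hq : q ≤ 1) {ε t : ℝ} (hε : 0 ≤ ε)
    (ht : 0 ≤ t → cdf' μ t + ε ≤ q) :
    (iid μ n).real {ω | saa q n ω < t} ≤ exp (-(2 * n * ε ^ 2)) := by
  refine (measureReal_mono fun ω hω => ?_).trans (measureReal_cdf'_add_le_empCdf_le hn t hε)
  have hq' := le_of_nonnegQuantile_lt (monotone_empCdf ω) (exists_nonneg_le_empCdf hn hq ω) hω
  exact (ht (nonnegQuantile_nonneg.trans (le_of_lt hω))).trans hq'

end SAA

/-- High-probability additive regret upper bound for SAA on any distribution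
with mean at most 1: if `n ≥ 2·log(2/δ)/(1−q)²`, then with probability at least `1−δ`,
`L(â) − L(a*) ≤ (2/(1−q))·√(log(2/δ)/(2n))`. -/
theorem saa_high_prob_additive_regret_general
    (q : ℝ) (hq : q ∈ Ioo (0:ℝ) 1)
    (μ : Measure ℝ) [IsProbabilityMeasure μ] (hsupp : μ (Iio 0) = 0)
    (hmean : Integrable (fun z => z) μ) (hmean1 : (∫ z, z ∂μ) ≤ 1)
    (n : ℕ) (δ : ℝ) (hδ : δ ∈ Ioo (0:ℝ) 1)
    (hn : 2 * Real.log (2/δ) / (1 - q)^2 ≤ n) :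
    ENNReal.ofReal (1 - δ) ≤
      (iid μ n) {ω | expLoss q μ (saa q n ω) - expLoss q μ (optDec q μ)
        ≤ (2/(1-q)) * Real.sqrt (Real.log (2/δ) / (2*n))} := by
  obtain ⟨hδ0, hδ1⟩ := hδ
  have hlog : 0 < Real.log (2 / δ) := Real.log_pos (by rw [lt_div_iff₀ hδ0]; linarith)
  have hn0 : 0 < n := by
    have : (0 : ℝ) < 2 * Real.log (2 / δ) / (1 - q) ^ 2 :=
      div_pos (by positivity) (pow_pos (sub_pos.2 hq.2) 2)
    exact_mod_cast this.trans_le hn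
  set ε := Real.sqrt (Real.log (2 / δ) / (2 * n))
  have hε : 0 < ε := Real.sqrt_pos.2 (by positivity)
  have hεq : ε ≤ (1 - q) / 2 := sqrt_div_two_mul_le (by linarith [hq.2]) (by positivity) hn
  have hexp : Real.exp (-(2 * n * ε ^ 2)) = δ / 2 := by
    rw [Real.sq_sqrt (by positivity), mul_div_cancel₀ _ (by positivity), Real.exp_neg,
      Real.exp_log (by positivity), inv_div]
  set b := nonnegQuantile (cdf' μ) (q + ε)
  set c := nonnegQuantile (cdf' μ) (q - ε)
  have hb : q + ε ≤ cdf' μ b := le_apply_nonnegQuantile monotone_cdf'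
    (continuousWithinAt_cdf'_Ici _) (exists_nonneg_le_cdf' hsupp hmean hmean1 (by linarith))
  have hc (hc0 : 0 ≤ c - ε) : cdf' μ (c - ε) + ε ≤ q := by
    linarith [lt_of_lt_nonnegQuantile hc0 (sub_lt_self c hε)]
  refine ofReal_one_sub_le_of_measureReal_compl_le ?_
  calc _ ≤ (iid μ n).real ({ω | saa q n ω < c - ε} ∪ {ω | b < saa q n ω}) := by
        refine measureReal_mono fun ω hω => ?_
        by_contra hgood
        simp only [mem_union, mem_ofPred_eq, not_or, not_lt] at hgood
        exact hω (expLoss_sub_expLoss_optDec_le hq hsupp hmean hmean1 hε.le hεq hgood.1 hgood.2)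
    _ ≤ δ / 2 + δ / 2 := by
        refine (measureReal_union_le _ _).trans (add_le_add ?_ ?_) <;> rw [← hexp]
        · exact measureReal_saa_lt_le hn0 hq.2.le hε.le hc
        · exact measureReal_lt_saa_le hn0 hε.le nonnegQuantile_nonneg hb
    _ = δ := add_halves δ
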